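/- Let λ : 𝕆 → 𝕆 be a linear isometry with λ(1) = 1. Then λ(p·v) = λ(p)·λ(v) holds for all p ∈ S⁶ and all v ∈ 𝕆 orthogonal to 1 and p if and only if λ is an ℝ-algebra automorphism of 𝕆, i.e., λ(x·y) = λ(x)·λ(y) for all x, y ∈ 𝕆. (Equivalently: the isotropy group of the canonical almost complex structure J^cn under the SO(7)-action is the automorphism group G₂ of the octonions.) -/

import Mathlib

noncomputable section

open scoped RealInnerProductSpace

/-- The octonions `𝕆`, realized as the Cayley–Dickson double of the quaternions:
pairs of quaternions `a + I·b`, with the Euclidean (`ℓ²`) inner product space structure. -/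
abbrev 𝕆 : Type := WithLp 2 ((Quaternion ℝ) × (Quaternion ℝ))

namespace Oct

/-- The octonion `a + I·b` built from a pair of quaternions `(a, b)`. -/
def mkO (a b : Quaternion ℝ) : 𝕆 := (WithLp.equiv 2 ((Quaternion ℝ) × (Quaternion ℝ))).symm (a, b)

def fstO (x : 𝕆) : Quaternion ℝ := (WithLp.equiv 2 ((Quaternion ℝ) × (Quaternion ℝ)) x).1
def sndO (x : 𝕆) : Quaternion ℝ := (WithLp.equiv 2 ((Quaternion ℝ) × (Quaternion ℝ)) x).2

/-- Cayley–Dickson multiplication of octonions: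
`(a + I·b)(c + I·d) = (ac − d·conj(b)) + I·(cb + conj(a)·d)`. -/
def omul (x y : 𝕆) : 𝕆 :=
  mkO (fstO x * fstO y - sndO y * star (sndO x)) (fstO y * sndO x + star (fstO x) * sndO y)

/-- The octonion unit `1 = (1, 0)`. -/
def o1 : 𝕆 := mkO 1 0

/-- The octonion `i = (i, 0)`. -/
def oI : 𝕆 := mkO ⟨0, 1, 0, 0⟩ 0

/-- Octonion conjugation, `conj x = 2⟨x,1⟩·1 − x`. -/
def oconj (x : 𝕆) : 𝕆 := (2 * ⟪x, o1⟫) • o1 - x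

/-- Powers of an octonion (unambiguous by power-associativity of `𝕆`). -/
def opow (x : 𝕆) : ℕ → 𝕆
  | 0 => o1
  | n + 1 => omul x (opow x n)

/-- The unit sphere `S⁷ ⊆ 𝕆`. -/
def S7 : Set 𝕆 := {x | ‖x‖ = 1}

/-- The unit sphere `S⁶` of the imaginary octonions (unit octonions orthogonal to `1`). -/
def S6 : Set 𝕆 := {x | ‖x‖ = 1 ∧ ⟪x, o1⟫ = 0}

/-- The tangent space `T_pS⁶ = (span{1,p})^⊥ ⊆ 𝕆`. -/
def TpS (p : 𝕆) : Submodule ℝ 𝕆 := (Submodule.span ℝ {o1, p})ᗮ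

/-- `ℝ⁶ = (span{1,i})^⊥ ⊆ 𝕆`. -/
def R6 : Submodule ℝ 𝕆 := TpS oI

lemma oext {x y : 𝕆} (h1 : fstO x = fstO y) (h2 : sndO x = sndO y) : x = y :=
  (WithLp.equiv 2 ((Quaternion ℝ) × (Quaternion ℝ))).injective (Prod.ext h1 h2)

lemma fstO_mkO (a b : Quaternion ℝ) : fstO (mkO a b) = a := rfl
lemma sndO_mkO (a b : Quaternion ℝ) : sndO (mkO a b) = b := rfl
lemma fstO_add (x y : 𝕆) : fstO (x + y) = fstO x + fstO y := rfl
lemma sndO_add (x y : 𝕆) : sndO (x + y) = sndO x + sndO y := rfl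
lemma fstO_smul (r : ℝ) (x : 𝕆) : fstO (r • x) = r • fstO x := rfl
lemma sndO_smul (r : ℝ) (x : 𝕆) : sndO (r • x) = r • sndO x := rfl
lemma qstar_smul (r : ℝ) (q : Quaternion ℝ) : star (r • q) = r • star q := by simp

/-- Octonion multiplication as an `ℝ`-bilinear map. -/
def omulₗ : 𝕆 →ₗ[ℝ] 𝕆 →ₗ[ℝ] 𝕆 :=
  LinearMap.mk₂ ℝ omul
    (by
      intro x x' y
      apply oext <;>
        simp only [omul, fstO_mkO, sndO_mkO, fstO_add, sndO_add, star_add] <;> noncomm_ring)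
    (by
      intro r x y
      apply oext <;>
        simp only [omul, fstO_mkO, sndO_mkO, fstO_smul, sndO_smul, qstar_smul,
          smul_mul_assoc, mul_smul_comm, smul_sub, smul_add])
    (by
      intro x y y'
      apply oext <;>
        simp only [omul, fstO_mkO, sndO_mkO, fstO_add, sndO_add, star_add] <;> noncomm_ring)
    (by
      intro r x y
      apply oext <;>
        simp only [omul, fstO_mkO, sndO_mkO, fstO_smul, sndO_smul, qstar_smul,
          smul_mul_assoc, mul_smul_comm, smul_sub, smul_add])

/-- Octonion multiplication as a continuous bilinear map. -/
def omulL : 𝕆 →L[ℝ] 𝕆 →L[ℝ] 𝕆 :=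
  LinearMap.toContinuousLinearMap
    { toFun := fun x => LinearMap.toContinuousLinearMap (omulₗ x)
      map_add' := by
        intro x x'
        ext v
        simp
      map_smul' := by
        intro r x
        ext v
        simp }

lemma omulL_apply (x y : 𝕆) : omulL x y = omul x y := rfl

/-- The family `(u, Ju, v, Jv, w, Jw)` associated to `J : 𝕆 → 𝕆` and `u v w : 𝕆`. -/
def JFam (J : 𝕆 → 𝕆) (u v w : 𝕆) : Fin 6 → 𝕆 := ![u, J u, v, J v, w, J w]

/-- The family `f` is a basis of the subspace `V ⊆ 𝕆`. -/
def IsBasisFam (V : Submodule ℝ 𝕆) (f : Fin 6 → 𝕆) : Prop :=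
  LinearIndependent ℝ f ∧ Submodule.span ℝ (Set.range f) = V

/-- Two families are positively related if one is obtained from the other by a matrix of
positive determinant. -/
def PosRelated (f g : Fin 6 → 𝕆) : Prop :=
  ∃ M : Matrix (Fin 6) (Fin 6) ℝ, (∀ k, g k = ∑ l, M k l • f l) ∧ 0 < M.det

/-- `J` and `K` induce the same orientation on the 6-dimensional subspace `V ⊆ 𝕆`: any
basis of `V` of the form `(u, Ju, v, Jv, w, Jw)` is positively related to any basis of `V`
of the form `(u', Ku', v', Kv', w', Kw')`. -/
def SameOri (V : Submodule ℝ 𝕆) (J K : 𝕆 → 𝕆) : Prop :=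
  ∀ u v w u' v' w' : 𝕆, IsBasisFam V (JFam J u v w) → IsBasisFam V (JFam K u' v' w') →
    PosRelated (JFam K u' v' w') (JFam J u v w)

/-- `J` (a linear endomorphism of `𝕆`) restricts to an orthogonal complex structure on the
subspace `V ⊆ 𝕆`: it maps `V` to `V` isometrically, and squares to `-id` on `V`. -/
structure IsOCS (V : Submodule ℝ 𝕆) (J : 𝕆 →ₗ[ℝ] 𝕆) : Prop where
  mapsTo : ∀ v ∈ V, J v ∈ V
  norm : ∀ v ∈ V, ‖J v‖ = ‖v‖
  sq : ∀ v ∈ V, J (J v) = -v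

/-- A quaternion subalgebra of `𝕆`: a 4-dimensional real subalgebra containing `1`. -/
def IsQuatSubalg (A : Submodule ℝ 𝕆) : Prop :=
  o1 ∈ A ∧ (∀ a ∈ A, ∀ b ∈ A, omul a b ∈ A) ∧ Module.finrank ℝ A = 4

lemma inner_o1_o1 : ⟪o1, o1⟫ = 1 := by
  show (inner ℝ (mkO 1 0).fst (mkO 1 0).fst : ℝ) + inner ℝ (mkO 1 0).snd (mkO 1 0).snd = 1
  simp [mkO, Quaternion.inner_self]

lemma norm_o1 : ‖o1‖ = 1 := by
  rw [@norm_eq_sqrt_real_inner, inner_o1_o1, Real.sqrt_one]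

lemma inner_oI_oI : ⟪oI, oI⟫ = 1 := by
  show (inner ℝ (mkO ⟨0,1,0,0⟩ 0).fst (mkO ⟨0,1,0,0⟩ 0).fst : ℝ)
      + inner ℝ (mkO ⟨0,1,0,0⟩ 0).snd (mkO ⟨0,1,0,0⟩ 0).snd = 1
  simp [mkO, Quaternion.inner_self, Quaternion.normSq_def]
  exact (Quaternion.inner_self _).trans ((Quaternion.normSq_def' _).trans (by norm_num))

lemma norm_oI : ‖oI‖ = 1 := by
  rw [@norm_eq_sqrt_real_inner, inner_oI_oI, Real.sqrt_one]

lemma inner_oI_o1 : ⟪oI, o1⟫ = 0 := by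
  show (inner ℝ (mkO ⟨0,1,0,0⟩ 0).fst (mkO 1 0).fst : ℝ)
      + inner ℝ (mkO ⟨0,1,0,0⟩ 0).snd (mkO 1 0).snd = 0
  simp [mkO, Quaternion.inner_def]
  exact (Quaternion.inner_def _ _).trans ((Quaternion.re_mul _ _).trans (by
    simp [Quaternion.re_star, Quaternion.imI_star, Quaternion.imJ_star, Quaternion.imK_star] <;> rfl))

lemma omul_one (x : 𝕆) : omul x o1 = x := by
  apply oext <;> simp [omul, o1, fstO_mkO, sndO_mkO]

lemma oconj_o1 : oconj o1 = o1 := by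
  unfold oconj
  rw [inner_o1_o1, mul_one, two_smul]
  abel

/-- `1 ∈ S⁷`. -/
lemma o1_mem_S7 : o1 ∈ S7 := norm_o1

/-- `i ∈ S⁶`. -/
lemma oI_mem_S6 : oI ∈ S6 := ⟨norm_oI, inner_oI_o1⟩

end Oct

namespace Oct

lemma one_omul (y : 𝕆) : omul o1 y = y := by
  apply oext <;> simp [omul, o1, fstO_mkO, sndO_mkO]

lemma omul_add_left (x x' y : 𝕆) : omul (x + x') y = omul x y + omul x' y :=
  LinearMap.map_add₂ omulₗ x x' y

lemma omul_add_right (x y y' : 𝕆) : omul x (y + y') = omul x y + omul x y' :=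
  (omulₗ x).map_add y y'

lemma omul_smul_left (r : ℝ) (x y : 𝕆) : omul (r • x) y = r • omul x y :=
  LinearMap.map_smul₂ omulₗ r x y

lemma omul_smul_right (r : ℝ) (x y : 𝕆) : omul x (r • y) = r • omul x y :=
  (omulₗ x).map_smul r y

lemma zero_omul (y : 𝕆) : omul 0 y = 0 :=
  LinearMap.map_zero₂ omulₗ y

lemma inner_o1_eq_re_fstO (x : 𝕆) : ⟪x, o1⟫ = (fstO x).re := by
  show (inner ℝ (fstO x) (mkO 1 0).fst : ℝ) + inner ℝ (sndO x) (mkO 1 0).snd = _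
  simp [mkO, Quaternion.inner_def]

lemma norm_sq_eq_normSq_fstO_add_normSq_sndO (x : 𝕆) :
    ‖x‖ ^ 2 = Quaternion.normSq (fstO x) + Quaternion.normSq (sndO x) := by
  rw [← real_inner_self_eq_norm_sq]
  show (inner ℝ (fstO x) (fstO x) : ℝ) + inner ℝ (sndO x) (sndO x) = _
  simp [Quaternion.normSq_eq_norm_mul_self, sq]

lemma omul_self_of_inner_o1_eq_zero {x : 𝕆} (hx : ⟪x, o1⟫ = 0) :
    omul x x = (-‖x‖ ^ 2) • o1 := by
  have hstar : star (fstO x) = -fstO x := by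
    rw [inner_o1_eq_re_fstO] at hx
    ext <;> simp [hx]
  apply oext
  · calc fstO x * fstO x - sndO x * star (sndO x)
        = -(star (fstO x) * fstO x) - sndO x * star (sndO x) := by rw [hstar, neg_mul, neg_neg]
      _ = (-(Quaternion.normSq (fstO x) + Quaternion.normSq (sndO x))) • (1 : Quaternion ℝ) := by
        rw [Quaternion.star_mul_self, Quaternion.self_mul_star, ← Algebra.algebraMap_eq_smul_one,
          map_neg, map_add, neg_add']
        rfl
      _ = fstO ((-‖x‖ ^ 2) • o1) := by rw [norm_sq_eq_normSq_fstO_add_normSq_sndO]; rfl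
  · show fstO x * sndO x + star (fstO x) * sndO x = (-‖x‖ ^ 2) • (0 : Quaternion ℝ)
    rw [hstar, smul_zero, neg_mul, add_neg_cancel]

lemma inner_sub_inner_o1_smul_o1 (x : 𝕆) : ⟪x - ⟪x, o1⟫ • o1, o1⟫ = 0 := by
  rw [inner_sub_left, real_inner_smul_left, inner_o1_o1, mul_one, sub_self]

lemma map_omul_of_map_omul_imaginary (e : 𝕆 →ₗ[ℝ] 𝕆) (he : e o1 = o1)
    (h : ∀ p q : 𝕆, ⟪p, o1⟫ = 0 → ⟪q, o1⟫ = 0 → e (omul p q) = omul (e p) (e q))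
    (x y : 𝕆) : e (omul x y) = omul (e x) (e y) := by
  obtain ⟨a, p, hp, rfl⟩ : ∃ (a : ℝ) (p : 𝕆), ⟪p, o1⟫ = 0 ∧ a • o1 + p = x :=
    ⟨_, _, inner_sub_inner_o1_smul_o1 x, add_sub_cancel _ _⟩
  obtain ⟨b, q, hq, rfl⟩ : ∃ (b : ℝ) (q : 𝕆), ⟪q, o1⟫ = 0 ∧ b • o1 + q = y :=
    ⟨_, _, inner_sub_inner_o1_smul_o1 y, add_sub_cancel _ _⟩
  simp only [omul_add_left, omul_add_right, omul_smul_left, omul_smul_right, one_omul, omul_one,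
    map_add, map_smul, he, h p q hp hq]

lemma map_omul_of_forall_S6_orthogonal (e : 𝕆 →ₗ[ℝ] 𝕆)
    (h : ∀ p ∈ S6, ∀ v : 𝕆, ⟪v, o1⟫ = 0 → ⟪v, p⟫ = 0 → e (omul p v) = omul (e p) (e v))
    {p v : 𝕆} (hp : ⟪p, o1⟫ = 0) (hv : ⟪v, o1⟫ = 0) (hvp : ⟪v, p⟫ = 0) :
    e (omul p v) = omul (e p) (e v) := by
  rcases eq_or_ne p 0 with rfl | hp0
  · rw [zero_omul, map_zero, zero_omul]
  have hnp : ‖p‖ ≠ 0 := norm_ne_zero_iff.mpr hp0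
  have hunit : ‖p‖⁻¹ • p ∈ S6 :=
    ⟨by rw [norm_smul, norm_inv, norm_norm, inv_mul_cancel₀ hnp],
      by rw [real_inner_smul_left, hp, mul_zero]⟩
  have := congrArg (‖p‖ • ·) (h _ hunit v hv (by rw [real_inner_smul_right, hvp, mul_zero]))
  simpa only [omul_smul_left, map_smul, smul_smul, mul_inv_cancel₀ hnp, one_smul] using this

lemma map_omul_self (e : 𝕆 →ₗᵢ[ℝ] 𝕆) (he : e o1 = o1) {p : 𝕆} (hp : ⟪p, o1⟫ = 0) :
    e (omul p p) = omul (e p) (e p) := by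
  have hep : ⟪e p, o1⟫ = 0 := by rw [← he, LinearIsometry.inner_map_map, hp]
  rw [omul_self_of_inner_o1_eq_zero hp, omul_self_of_inner_o1_eq_zero hep, map_smul, he,
    e.norm_map]

/-- Splitting `v = c • p + w` with `w ⊥ p` reduces to the orthogonal case and to `p · p`. -/
lemma map_omul_of_forall_S6_imaginary (e : 𝕆 →ₗᵢ[ℝ] 𝕆) (he : e o1 = o1)
    (h : ∀ p ∈ S6, ∀ v : 𝕆, ⟪v, o1⟫ = 0 → ⟪v, p⟫ = 0 → e (omul p v) = omul (e p) (e v))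
    {p v : 𝕆} (hp : ⟪p, o1⟫ = 0) (hv : ⟪v, o1⟫ = 0) :
    e (omul p v) = omul (e p) (e v) := by
  rcases eq_or_ne p 0 with rfl | hp0
  · exact map_omul_of_forall_S6_orthogonal e.toLinearMap h hp hv (inner_zero_right v)
  set c : ℝ := ⟪v, p⟫ / ‖p‖ ^ 2
  set w : 𝕆 := v - c • p
  have hw : ⟪w, o1⟫ = 0 := by rw [inner_sub_left, real_inner_smul_left, hp, hv, mul_zero, sub_zero]
  have hwp : ⟪w, p⟫ = 0 := by
    rw [inner_sub_left, real_inner_smul_left, real_inner_self_eq_norm_sq,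
      div_mul_cancel₀ _ (pow_ne_zero 2 (norm_ne_zero_iff.mpr hp0)), sub_self]
  have hpw := map_omul_of_forall_S6_orthogonal e.toLinearMap h hp hw hwp
  rw [← sub_add_cancel v (c • p)]
  simp only [omul_add_right, omul_smul_right, map_add, map_smul, map_omul_self e he hp]
  exact congrArg (· + _) hpw

end Oct

open Oct in
/-- A linear isometry `e` of `𝕆` with `e(1) = 1` fixes the canonical almost complex
structure (i.e. `e(p·v) = e(p)·e(v)` for all `p ∈ S⁶` and `v ⊥ 1, p`) if and only if it is
an `ℝ`-algebra automorphism of `𝕆`; that is, the isotropy group of `J^cn` in `SO(7)` is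
`G₂ = Aut(𝕆)`. -/
theorem isotropy_of_canonical_is_G2 (e : 𝕆 →ₗᵢ[ℝ] 𝕆) (he : e o1 = o1) :
    (∀ p ∈ S6, ∀ v : 𝕆, ⟪v, o1⟫ = 0 → ⟪v, p⟫ = 0 →
        e (omul p v) = omul (e p) (e v)) ↔
      (∀ x y : 𝕆, e (omul x y) = omul (e x) (e y)) :=
  ⟨fun h => map_omul_of_map_omul_imaginary e.toLinearMap he fun _ _ hp hq =>
      map_omul_of_forall_S6_imaginary e he h hp hq,
    fun h p _ v _ _ => h p v⟩
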